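/- For every integer ν ≥ 2 and z ≠ 0, the quantity S(ν,z) := (1/√π)·∑_{j=0}^{ν-2} ((z/2)^{ν-1-j}/Γ(ν+1/2-j))·C_j(ν,z), where C_j(ν,z) satisfies C₀=1, C₁=2(ν-1)/z, C_j = (2(ν-j)/z)C_{j-1} − C_{j-2}, equals (2^{2ν-1}/π)·∑_{j=0}^{ν-2} (Γ(ν-j)·2^{-2j}/Γ(2ν-2j))·∑_{κ=0}^{⌈(j-1)/2⌉} ((-1)^κ·Γ(ν-κ)·Γ(j+1-κ))/(Γ(j+1-2κ)·Γ(κ+ν-j)·κ!)·(z/2)^{2κ-2j+ν-1}. -/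

import Mathlib

open Real Finset

/-- The coefficients `C_n(ν,z)`: `C₀ = 1`, `C₁ = 2(ν-1)/z`,
`C_n = (2(ν-n)/z) C_{n-1} - C_{n-2}`. -/
noncomputable def lomC (ν z : ℝ) : ℕ → ℝ
  | 0 => 1
  | 1 => 2 * (ν - 1) / z
  | (n + 2) => (2 * (ν - (n + 2)) / z) * lomC ν z (n + 1) - lomC ν z n

/-- `S(ν,z) = (1/√π) ∑_{j=0}^{ν-2} (z/2)^{ν-1-j} C_j(ν,z) / Γ(ν+1/2-j)`. -/
noncomputable def Ssum (ν : ℕ) (z : ℝ) : ℝ :=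
  (1 / Real.sqrt Real.pi) *
    ∑ j ∈ Finset.range (ν - 1),
      (z / 2)^(ν - 1 - j) / Real.Gamma ((ν : ℝ) + 1/2 - j) * lomC (ν : ℝ) z j

/-! Unwinding the recurrence gives the explicit form of the Lommel polynomial,
`C_j(ν,z) = ∑_κ (-1)^κ binom(j-κ, κ) (ν-1-κ)(ν-2-κ)⋯(ν-j+κ) (2/z)^(j-2κ)`:
its coefficients satisfy the recurrence one power of `z` at a time, by Pascal's rule.
For integral `ν` the binomial and the falling factorial are quotients of Gamma values, and
Legendre's duplication formula `Γ(s) Γ(s+1/2) = 2^(1-2s) √π Γ(2s)` at `s = ν - j` turns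
`1/(√π Γ(ν+1/2-j))` into `2^(2ν-1) Γ(ν-j) 2^(-2j) / (π Γ(2ν-2j))`. -/

open Polynomial

lemma descPochhammer_eval_succ_left {R : Type*} [CommRing R] (n : ℕ) (x : R) :
    (descPochhammer R (n + 1)).eval x = x * (descPochhammer R n).eval (x - 1) := by
  rw [descPochhammer_succ_left, eval_mul, eval_X, eval_comp, eval_sub, eval_X, eval_one]

noncomputable def lommelCoeff (ν : ℝ) (j κ : ℕ) : ℝ :=
  (-1) ^ κ * ((j - κ).choose κ : ℝ) * (descPochhammer ℝ (j - 2 * κ)).eval (ν - 1 - κ)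

lemma lommelCoeff_of_lt {ν : ℝ} {j κ : ℕ} (h : j < 2 * κ) : lommelCoeff ν j κ = 0 := by
  rw [lommelCoeff, Nat.choose_eq_zero_of_lt (by omega), Nat.cast_zero, mul_zero, zero_mul]

lemma lommelCoeff_add_two_zero (ν : ℝ) (j : ℕ) :
    lommelCoeff ν (j + 2) 0 = (ν - j - 2) * lommelCoeff ν (j + 1) 0 := by
  simp only [lommelCoeff, pow_zero, Nat.sub_zero, Nat.choose_zero_right, Nat.cast_one,
    one_mul, mul_zero, Nat.cast_zero, sub_zero, descPochhammer_succ_eval]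
  push_cast
  ring

lemma lommelCoeff_add_two_succ (ν : ℝ) (j κ : ℕ) :
    lommelCoeff ν (j + 2) (κ + 1) =
      (ν - j - 2) * lommelCoeff ν (j + 1) (κ + 1) - lommelCoeff ν j κ := by
  rcases lt_or_ge j (2 * κ) with hj | hj
  · rw [lommelCoeff_of_lt hj, lommelCoeff_of_lt (by omega), lommelCoeff_of_lt (by omega)]
    ring
  obtain ⟨n, rfl⟩ := Nat.exists_eq_add_of_le hj
  rcases n with _ | n
  · rw [add_zero] at *
    rw [lommelCoeff_of_lt (j := 2 * κ + 1) (by omega)]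
    simp [lommelCoeff, show 2 * κ + 2 - (κ + 1) = κ + 1 by omega,
      show 2 * κ + 2 - 2 * (κ + 1) = 0 by omega, show 2 * κ - κ = κ by omega, pow_succ]
  · have hchoose :
        ((κ + n + 1).choose (κ + 1) : ℝ) * (κ + 1) = (κ + n + 1).choose κ * (n + 1) := by
      exact_mod_cast (by simpa [show κ + n + 1 - κ = n + 1 by omega]
        using Nat.choose_succ_right_eq (κ + n + 1) κ)
    simp only [lommelCoeff, show 2 * κ + (n + 1) + 2 - (κ + 1) = κ + n + 1 + 1 by omega,
      show 2 * κ + (n + 1) + 2 - 2 * (κ + 1) = n + 1 by omega,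
      show 2 * κ + (n + 1) + 1 - (κ + 1) = κ + n + 1 by omega,
      show 2 * κ + (n + 1) + 1 - 2 * (κ + 1) = n by omega,
      show 2 * κ + (n + 1) - κ = κ + n + 1 by omega,
      show 2 * κ + (n + 1) - 2 * κ = n + 1 by omega, Nat.choose_succ_succ' (κ + n + 1) κ]
    push_cast
    rw [descPochhammer_succ_eval n (ν - 1 - (κ + 1)),
      descPochhammer_eval_succ_left n (ν - 1 - κ),
      show ν - 1 - κ - 1 = ν - 1 - (κ + 1) by ring]
    linear_combination -(-1) ^ κ * (descPochhammer ℝ n).eval (ν - 1 - (κ + 1)) * hchoose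

/-- Any `N > j/2` will do, since `lommelCoeff ν j κ = 0` for `2κ > j`; this freedom spares the
induction from dropping boundary terms. -/
theorem lomC_eq_sum (ν : ℝ) {z : ℝ} (hz : z ≠ 0) (j : ℕ) {N : ℕ} (hN : j / 2 < N) :
    lomC ν z j = ∑ κ ∈ range N, lommelCoeff ν j κ * (z / 2) ^ (2 * (κ : ℤ) - j) := by
  induction j using Nat.strong_induction_on generalizing N with
  | _ j ih =>
  obtain ⟨M, rfl⟩ : ∃ M, N = M + 1 := ⟨N - 1, by omega⟩
  rw [sum_range_succ']
  match j with
  | 0 | 1 =>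
    rw [sum_eq_zero fun κ _ => by rw [lommelCoeff_of_lt (by omega), zero_mul]]
    simp [lomC, lommelCoeff, mul_div_assoc, mul_comm]
  | j + 2 =>
    have hx : z / 2 ≠ 0 := div_ne_zero hz two_ne_zero
    rw [lomC, ih (j + 1) (by omega) (N := M + 1) (by omega), ih j (by omega) (N := M) (by omega),
      sum_range_succ', lommelCoeff_add_two_zero, mul_add, mul_sum, add_sub_right_comm,
      ← sum_sub_distrib]
    congr 1
    · refine sum_congr rfl fun κ _ => ?_
      rw [lommelCoeff_add_two_succ]
      push_cast
      rw [show 2 * ((κ : ℤ) + 1) - ((j : ℤ) + 1) = 2 * κ - j + 1 by ring,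
        show 2 * ((κ : ℤ) + 1) - ((j : ℤ) + 2) = 2 * κ - j by ring, zpow_add_one₀ hx]
      field_simp
      ring
    · push_cast
      rw [show (0 : ℤ) - (j + 1) = 0 - (j + 2) + 1 by ring, zpow_add_one₀ hx]
      field_simp
      ring

lemma Gamma_sub_add_one_mul_descPochhammer_eval {y : ℝ} {n : ℕ} (h : (n : ℝ) < y + 1) :
    Gamma (y - n + 1) * (descPochhammer ℝ n).eval y = Gamma (y + 1) := by
  induction n with
  | zero => simp
  | succ n ih =>
    push_cast at h ⊢
    rw [descPochhammer_succ_eval, ← ih (by linarith), Gamma_add_one (by linarith : y - n ≠ 0),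
      show y - (n + 1) + 1 = y - n by ring]
    ring

lemma lommelCoeff_eq_Gamma {ν : ℝ} {j κ : ℕ} (hj : (j : ℝ) < ν) (hκ : 2 * κ ≤ j) :
    lommelCoeff ν j κ = (-1) ^ κ * Gamma (ν - κ) * Gamma ((j : ℝ) + 1 - κ) /
      (Gamma ((j : ℝ) + 1 - 2 * κ) * Gamma ((κ : ℝ) + ν - j) * (κ.factorial : ℝ)) := by
  have hcast₁ : ((j - κ : ℕ) : ℝ) = j - κ := by rw [Nat.cast_sub (by omega)]
  have hcast₂ : ((j - 2 * κ : ℕ) : ℝ) = j - 2 * κ := by push_cast [Nat.cast_sub hκ]; ring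
  have hκj : (2 * κ : ℝ) ≤ j := by exact_mod_cast hκ
  have hbinom : Gamma ((j : ℝ) + 1 - 2 * κ) * (κ.factorial * (j - κ).choose κ) =
      Gamma ((j : ℝ) + 1 - κ) := by
    have := Gamma_sub_add_one_mul_descPochhammer_eval (y := ((j - κ : ℕ) : ℝ)) (n := κ)
      (by rw [hcast₁]; linarith)
    rw [descPochhammer_eval_eq_descFactorial, Nat.descFactorial_eq_factorial_mul_choose,
      hcast₁] at this
    push_cast at this
    rwa [show (j : ℝ) - κ - κ + 1 = j + 1 - 2 * κ by ring,
      show (j : ℝ) - κ + 1 = j + 1 - κ by ring] at this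
  have hpoch : Gamma ((κ : ℝ) + ν - j) * (descPochhammer ℝ (j - 2 * κ)).eval (ν - 1 - κ) =
      Gamma (ν - κ) := by
    have := Gamma_sub_add_one_mul_descPochhammer_eval (y := ν - 1 - κ) (n := j - 2 * κ)
      (by rw [hcast₂]; linarith)
    rwa [hcast₂, show ν - 1 - κ - (j - 2 * κ) + 1 = κ + ν - j by ring,
      show ν - 1 - κ + 1 = ν - κ by ring] at this
  have hG₁ : 0 < Gamma ((j : ℝ) + 1 - 2 * κ) := Gamma_pos_of_pos (by linarith)
  have hG₂ : 0 < Gamma ((κ : ℝ) + ν - j) := Gamma_pos_of_pos (by linarith)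
  rw [lommelCoeff, ← hbinom, ← hpoch, eq_div_iff (by positivity)]
  ring

lemma one_div_sqrt_pi_mul_Gamma_add_half {s : ℝ} (hs : 0 < s) :
    1 / (√π * Gamma (s + 1 / 2)) = 2 ^ (2 * s - 1) / π * (Gamma s / Gamma (2 * s)) := by
  have hdup := Gamma_mul_Gamma_add_half s
  have hpow : (2 : ℝ) ^ (2 * s - 1) * 2 ^ (1 - 2 * s) = 1 := by
    rw [← rpow_add two_pos]; simp
  have hpi : √π * √π = π := mul_self_sqrt pi_pos.le
  rw [div_mul_div_comm, one_div, inv_eq_iff_eq_inv, inv_div, eq_div_iff (by positivity)]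
  linear_combination (2 : ℝ) ^ (2 * s - 1) * √π * hdup +
    Gamma (2 * s) * 2 ^ (2 * s - 1) * 2 ^ (1 - 2 * s) * hpi + Gamma (2 * s) * π * hpow

lemma one_div_sqrt_pi_mul_Gamma_natCast_sub_add_half {ν j : ℕ} (h : j < ν) :
    1 / (√π * Gamma ((ν : ℝ) + 1 / 2 - j)) =
      2 ^ (2 * ν - 1) / π *
        (Gamma ((ν : ℝ) - j) * (2 : ℝ) ^ (-(2 * (j : ℤ))) /
          Gamma (2 * (ν : ℝ) - 2 * j)) := by
  have hpow :
      (2 : ℝ) ^ (2 * ((ν : ℝ) - j) - 1) = 2 ^ (2 * ν - 1) * 2 ^ (-(2 * (j : ℤ))) := by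
    rw [← rpow_natCast, ← rpow_intCast, ← rpow_add two_pos]
    push_cast [Nat.cast_sub (by omega : 1 ≤ 2 * ν)]
    ring_nf
  rw [show (ν : ℝ) + 1 / 2 - j = (ν - j) + 1 / 2 by ring,
    one_div_sqrt_pi_mul_Gamma_add_half (by simpa using h), hpow,
    show 2 * ((ν : ℝ) - j) = 2 * ν - 2 * j by ring]
  ring

theorem Ssum_eq_general (ν : ℕ) (z : ℝ) (hz : z ≠ 0) :
    Ssum ν z =
      (2^(2 * ν - 1) / Real.pi) *
        ∑ j ∈ Finset.range (ν - 1),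
          (Real.Gamma ((ν : ℝ) - j) * (2 : ℝ)^(-(2 * (j : ℤ))) /
              Real.Gamma (2 * (ν : ℝ) - 2 * j)) *
            ∑ κ ∈ Finset.range (j / 2 + 1),
              ((-1)^κ * Real.Gamma ((ν : ℝ) - κ) * Real.Gamma ((j : ℝ) + 1 - κ)) /
                (Real.Gamma ((j : ℝ) + 1 - 2 * κ) * Real.Gamma ((κ : ℝ) + ν - j) *
                  (κ.factorial : ℝ)) *
                (z / 2)^(2 * (κ : ℤ) - 2 * j + ν - 1) := by
  rw [Ssum, mul_sum, mul_sum]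
  refine sum_congr rfl fun j hj => ?_
  have hjν : j + 1 < ν := by rw [mem_range] at hj; omega
  rw [lomC_eq_sum _ hz j (Nat.lt_succ_self _), mul_sum, mul_sum, mul_sum, mul_sum]
  refine sum_congr rfl fun κ hκ => ?_
  have hκj : 2 * κ ≤ j := by rw [mem_range] at hκ; omega
  have hpow : (z / 2) ^ (ν - 1 - j) * (z / 2) ^ (2 * (κ : ℤ) - j) =
      (z / 2) ^ (2 * (κ : ℤ) - 2 * j + ν - 1) := by
    rw [← zpow_natCast, ← zpow_add₀ (div_ne_zero hz two_ne_zero)]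
    congr 1
    omega
  rw [← lommelCoeff_eq_Gamma (by exact_mod_cast (by omega : j < ν)) hκj, ← hpow,
    ← mul_assoc ((2 : ℝ) ^ (2 * ν - 1) / π),
    ← one_div_sqrt_pi_mul_Gamma_natCast_sub_add_half (by omega : j < ν)]
  ring

/-- for `ν ≥ 2` and `z ≠ 0`,
`S(ν,z) = (2^{2ν-1}/π) ∑_{j=0}^{ν-2} (Γ(ν-j) 2^{-2j}/Γ(2ν-2j)) ∑_{κ=0}^{⌈(j-1)/2⌉}
 (-1)^κ Γ(ν-κ) Γ(j+1-κ)/(Γ(j+1-2κ) Γ(κ+ν-j) κ!) (z/2)^{2κ-2j+ν-1}`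
(with `⌈(j-1)/2⌉ = j/2` in natural division). -/
theorem Ssum_eq (ν : ℕ) (hν : 2 ≤ ν) (z : ℝ) (hz : z ≠ 0) :
    Ssum ν z =
      (2^(2 * ν - 1) / Real.pi) *
        ∑ j ∈ Finset.range (ν - 1),
          (Real.Gamma ((ν : ℝ) - j) * (2 : ℝ)^(-(2 * (j : ℤ))) /
              Real.Gamma (2 * (ν : ℝ) - 2 * j)) *
            ∑ κ ∈ Finset.range (j / 2 + 1),
              ((-1)^κ * Real.Gamma ((ν : ℝ) - κ) * Real.Gamma ((j : ℝ) + 1 - κ)) /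
                (Real.Gamma ((j : ℝ) + 1 - 2 * κ) * Real.Gamma ((κ : ℝ) + ν - j) *
                  (κ.factorial : ℝ)) *
                (z / 2)^(2 * (κ : ℤ) - 2 * j + ν - 1) :=
  Ssum_eq_general ν z hz
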